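/- Let g₊ be the positive part of a semisimple Lie algebra with Cartan matrix C = (c_{ij}), generated by elements e_i subject to the Serre relations. If n is a Q-graded Lie algebra with dim n_β ≤ 1 for all β and n_β = 0 for β ∉ Δ₊, then for any choice of nonzero elements 𝐞_i ∈ n_{α_i}, the elements 𝐞_i satisfy the Serre relations (ad 𝐞_i)^{1-c_{ij}} 𝐞_j = 0 for all i ≠ j, and hence there exists a Lie algebra homomorphism φ : g₊ → n with φ(e_i) = 𝐞_i. -/
import Mathlib


universe u v

/-!
STATEMENT 1. Let `gplus` be the positive part of a semisimple Lie algebra with Cartan matrix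
`c = (c i j)`, i.e. the Lie algebra presented by generators `e i` subject to the Serre
relations (encoded here by the universal property `huniv`: any family of elements of a Lie
algebra satisfying the Serre relations receives a homomorphism from `gplus`).  Let `n` be a
Lie algebra graded by the root lattice `Q = ι →₀ ℤ` whose components have dimension `≤ 1` and
vanish outside the set of positive roots `Δpos`; the key point being that
`(1 - c i j) • α i + α j` is never a positive root (`hnotroot`), where `α i` is the `i`-th
simple root.  Then any choice of nonzero `E i ∈ n_{α i}` satisfies the Serre relations
`(ad (E i))^(1 - c i j) (E j) = 0` for `i ≠ j`, and hence there is a Lie algebra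
homomorphism `φ : gplus → n` with `φ (e i) = E i`. -/
theorem serre_relations_and_hom_exists
    (k : Type u) [Field k] [CharZero k]
    (ι : Type) [Fintype ι] [DecidableEq ι]
    (c : ι → ι → ℤ) (hcii : ∀ i, c i i = 2) (hcoff : ∀ i j, i ≠ j → c i j ≤ 0)
    (Δpos : Set (ι →₀ ℤ))
    (hnotroot : ∀ i j : ι, i ≠ j →
      (1 - c i j) • (Finsupp.single i (1 : ℤ)) + Finsupp.single j (1 : ℤ) ∉ Δpos)
    (gplus : Type v) [LieRing gplus] [LieAlgebra k gplus] (e : ι → gplus)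
    (huniv : ∀ (m : Type v) [LieRing m] [LieAlgebra k m] (x : ι → m),
      (∀ i j, i ≠ j → ((LieAlgebra.ad k m (x i)) ^ (1 - c i j).toNat) (x j) = 0) →
      ∃ ψ : gplus →ₗ⁅k⁆ m, ∀ i, ψ (e i) = x i)
    (n : Type v) [LieRing n] [LieAlgebra k n]
    (grading : (ι →₀ ℤ) → Submodule k n) [DecidableEq (ι →₀ ℤ)]
    (hinternal : DirectSum.IsInternal grading)
    (hbracket : ∀ μ ν : ι →₀ ℤ, ∀ x ∈ grading μ, ∀ y ∈ grading ν,
      ⁅x, y⁆ ∈ grading (μ + ν))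
    (hdim : ∀ β : ι →₀ ℤ, Module.finrank k (grading β) ≤ 1)
    (hzero : ∀ β : ι →₀ ℤ, β ∉ Δpos → grading β = ⊥)
    (E : ι → n) (hEmem : ∀ i, E i ∈ grading (Finsupp.single i (1 : ℤ)))
    (hEne : ∀ i, E i ≠ 0) :
    (∀ i j, i ≠ j → ((LieAlgebra.ad k n (E i)) ^ (1 - c i j).toNat) (E j) = 0) ∧
      ∃ φ : gplus →ₗ⁅k⁆ n, ∀ i, φ (e i) = E i := by
  have key : ∀ i j, i ≠ j →
      ((LieAlgebra.ad k n (E i)) ^ (1 - c i j).toNat) (E j) = 0 := by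
    intro i j hij
    have hmem : ∀ m : ℕ, ((LieAlgebra.ad k n (E i)) ^ m) (E j) ∈
        grading ((m : ℤ) • Finsupp.single i (1 : ℤ) + Finsupp.single j (1 : ℤ)) := by
      intro m
      induction m with
      | zero => simpa using hEmem j
      | succ m ih =>
          have := hbracket _ _ _ (hEmem i) _ ih
          rw [pow_succ']
          simp only [Module.End.mul_apply, LieAlgebra.ad_apply]
          convert this using 2
          push_cast
          rw [add_smul, one_smul]; abel
    have h := hmem (1 - c i j).toNat
    have hc : ((1 - c i j).toNat : ℤ) = 1 - c i j := by
      have := hcoff i j hij; omega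
    rw [hc] at h
    rw [hzero _ (hnotroot i j hij)] at h
    simpa using h
  exact ⟨key, huniv n E key⟩
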